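/- arXiv:2305.05527 — 3 statements merged into one kernel-verified Lean document; each statement's English description precedes it below -/
import Mathlib

section
/- Let X be a Gamma(γ, ζ)-distributed random variable with γ, ζ > 0, let β > 0 and t ≥ 0. Then E[X · (exp(-X t) - exp(-β t))/(β - X)] = ∫₀^t (γ ζ^γ / (ζ + τ)^{γ+1}) exp(-β (t - τ)) dτ, where the integrand in the expectation is interpreted via its continuous extension at X = β. -/
open MeasureTheory ProbabilityTheory

section AuxGammaConv

open Real Set


lemma aux_integral_exp_mul (c t : ℝ) :
    ∫ τ in (0:ℝ)..t, Real.exp (c * τ) =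
      if c = 0 then t else (Real.exp (c * t) - 1) / c := by
  split_ifs with hc
  · simp [hc]
  · have hD : ∀ τ : ℝ, HasDerivAt (fun τ => Real.exp (c * τ) / c) (Real.exp (c * τ)) τ := by
      intro τ
      have h1 : HasDerivAt (fun τ : ℝ => c * τ) c τ := by
        simpa using (hasDerivAt_id τ).const_mul c
      have := ((Real.hasDerivAt_exp (c * τ)).comp τ h1).div_const c
      simpa [mul_div_cancel_right₀ _ hc] using this
    rw [intervalIntegral.integral_eq_sub_of_hasDerivAt (fun τ _ => hD τ)
      ((Real.continuous_exp.comp (continuous_const.mul continuous_id)).intervalIntegrable 0 t)]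
    simp [sub_div]

lemma aux_pointwise (β t x : ℝ) :
    (if x = β then β * t * Real.exp (-(β * t))
      else x * (Real.exp (-(x * t)) - Real.exp (-(β * t))) / (β - x)) =
    ∫ τ in (0:ℝ)..t, x * Real.exp (-(x * τ)) * Real.exp (-(β * (t - τ))) := by
  have hint : ∀ τ : ℝ, x * Real.exp (-(x * τ)) * Real.exp (-(β * (t - τ)))
      = x * Real.exp (-(β * t)) * Real.exp ((β - x) * τ) := by
    intro τ
    rw [mul_assoc, mul_assoc, ← Real.exp_add, ← Real.exp_add]
    ring_nf
  simp_rw [hint]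
  rw [intervalIntegral.integral_const_mul, aux_integral_exp_mul]
  by_cases h1 : x = β
  · subst h1
    rw [if_pos rfl, if_pos (sub_self x)]
    ring
  · rw [if_neg h1, if_neg (sub_ne_zero.mpr (Ne.symm h1))]
    have hβx : β - x ≠ 0 := sub_ne_zero.mpr (Ne.symm h1)
    have key : Real.exp (-(β * t)) * (Real.exp ((β - x) * t) - 1)
        = Real.exp (-(x * t)) - Real.exp (-(β * t)) := by
      rw [mul_sub, ← Real.exp_add, mul_one]; ring_nf
    field_simp
    rw [mul_comm t β, mul_comm t (β - x), mul_assoc, key]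


lemma aux_gamma_density (γ ζ : ℝ) :
    gammaMeasure γ ζ =
      volume.withDensity (fun x => ((gammaPDFReal γ ζ x).toNNReal : ENNReal)) := rfl

lemma aux_pdf_meas (γ ζ : ℝ) : Measurable (fun x => (gammaPDFReal γ ζ x).toNNReal) :=
  (measurable_gammaPDFReal γ ζ).real_toNNReal

lemma aux_weight_eq (γ ζ τ : ℝ) (hγ : 0 < γ) {x : ℝ} (hx : x ∈ Ioi (0:ℝ)) :
    gammaPDFReal γ ζ x * (x * Real.exp (-(x * τ)))
      = ζ ^ γ / Real.Gamma γ * (x ^ ((γ + 1) - 1) * Real.exp (-((ζ + τ) * x))) := by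
  have hx' : (0:ℝ) < x := hx
  rw [gammaPDFReal, if_pos hx'.le]
  have h1 : x ^ (γ - 1) * x = x ^ ((γ + 1) - 1) := by
    rw [add_sub_cancel_right, ← Real.rpow_add_one hx'.ne' (γ-1), sub_add_cancel]
  have h2 : Real.exp (-(ζ * x)) * Real.exp (-(x * τ)) = Real.exp (-((ζ + τ) * x)) := by
    rw [← Real.exp_add]; ring_nf
  calc ζ ^ γ / Real.Gamma γ * x ^ (γ - 1) * Real.exp (-(ζ * x)) * (x * Real.exp (-(x * τ)))
      = ζ ^ γ / Real.Gamma γ * ((x ^ (γ - 1) * x) * (Real.exp (-(ζ * x)) * Real.exp (-(x * τ)))) := by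
        ring
    _ = _ := by rw [h1, h2]

lemma aux_support (γ ζ τ : ℝ) :
    Function.support (fun x => gammaPDFReal γ ζ x * (x * Real.exp (-(x * τ)))) ⊆ Ioi 0 := by
  intro x hx
  by_contra h
  simp only [mem_Ioi, not_lt] at h
  rcases lt_or_eq_of_le h with h | h
  · simp [Function.mem_support, gammaPDFReal, not_le.mpr h] at hx
  · simp [Function.mem_support, ← h] at hx

lemma aux_moment_integrable (γ ζ τ : ℝ) (hγ : 0 < γ) (hζ : 0 < ζ) (hτ : 0 ≤ τ) :
    Integrable (fun x => x * Real.exp (-(x * τ))) (gammaMeasure γ ζ) := by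
  rw [aux_gamma_density, integrable_withDensity_iff_integrable_smul (aux_pdf_meas γ ζ)]
  have hmeas : Measurable (fun x : ℝ => gammaPDFReal γ ζ x * (x * Real.exp (-(x * τ)))) :=
    (measurable_gammaPDFReal γ ζ).mul
      (measurable_id.mul ((measurable_id.mul_const τ).neg.exp))
  have hIoi : IntegrableOn (fun x : ℝ => gammaPDFReal γ ζ x * (x * Real.exp (-(x * τ)))) (Ioi 0) := by
    have hbase : IntegrableOn (fun x : ℝ => x ^ ((γ + 1) - 1) * Real.exp (-(ζ + τ) * x ^ (1:ℝ)))
        (Ioi 0) :=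
      integrableOn_rpow_mul_exp_neg_mul_rpow (by linarith : (-1:ℝ) < (γ+1)-1) zero_lt_one
        (by linarith : 0 < ζ + τ)
    have : IntegrableOn (fun x : ℝ => ζ ^ γ / Real.Gamma γ *
        (x ^ ((γ + 1) - 1) * Real.exp (-((ζ + τ) * x)))) (Ioi 0) := by
      refine IntegrableOn.congr_fun
        (Integrable.const_mul hbase (ζ ^ γ / Real.Gamma γ)) (fun x hx => ?_) measurableSet_Ioi
      rw [Real.rpow_one, neg_mul]
    exact IntegrableOn.congr_fun this (fun x hx => (aux_weight_eq γ ζ τ hγ hx).symm) measurableSet_Ioi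
  have := (integrableOn_iff_integrable_of_support_subset (aux_support γ ζ τ)).mp hIoi
  refine this.congr (ae_of_all _ fun x => ?_)
  simp [NNReal.smul_def, Real.coe_toNNReal _ (gammaPDFReal_nonneg hγ hζ x)]

lemma aux_moment (γ ζ τ : ℝ) (hγ : 0 < γ) (hζ : 0 < ζ) (hτ : 0 ≤ τ) :
    ∫ x, x * Real.exp (-(x * τ)) ∂(gammaMeasure γ ζ)
      = γ * ζ ^ γ / (ζ + τ) ^ (γ + 1) := by
  have hζτ : 0 < ζ + τ := by linarith
  rw [aux_gamma_density, integral_withDensity_eq_integral_smul (aux_pdf_meas γ ζ)]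
  have h0 : ∀ x ∉ Ioi (0:ℝ),
      (gammaPDFReal γ ζ x).toNNReal • (x * Real.exp (-(x * τ))) = 0 := by
    intro x hx
    have := aux_support γ ζ τ
    have hz : gammaPDFReal γ ζ x * (x * Real.exp (-(x * τ))) = 0 := by
      by_contra h; exact hx (this h)
    simp only [NNReal.smul_def, Real.coe_toNNReal _ (gammaPDFReal_nonneg hγ hζ x)]
    exact hz
  rw [← setIntegral_eq_integral_of_forall_compl_eq_zero h0]
  have : ∀ x ∈ Ioi (0:ℝ), (gammaPDFReal γ ζ x).toNNReal • (x * Real.exp (-(x * τ)))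
      = ζ ^ γ / Real.Gamma γ * (x ^ ((γ + 1) - 1) * Real.exp (-((ζ + τ) * x))) := by
    intro x hx
    rw [NNReal.smul_def, Real.coe_toNNReal _ (gammaPDFReal_nonneg hγ hζ x), smul_eq_mul,
      aux_weight_eq γ ζ τ hγ hx]
  rw [setIntegral_congr_fun measurableSet_Ioi this, integral_const_mul,
    integral_rpow_mul_exp_neg_mul_Ioi (by linarith : (0:ℝ) < γ + 1) hζτ,
    Real.Gamma_add_one hγ.ne']
  have hG : Real.Gamma γ ≠ 0 := (Real.Gamma_pos_of_pos hγ).ne'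
  rw [div_rpow zero_le_one hζτ.le, Real.one_rpow]
  field_simp

end AuxGammaConv

open Real Set in
/-- For `X ~ Gamma(γ, ζ)`, `β > 0` and `t ≥ 0`,
`E[X (e^{-Xt} - e^{-βt})/(β - X)] = ∫₀ᵗ γ ζ^γ/(ζ+τ)^{γ+1} e^{-β(t-τ)} dτ`, where the integrand
is interpreted via its continuous extension at `X = β`. -/
theorem gamma_convolution_expectation (γ ζ β t : ℝ) (hγ : 0 < γ) (hζ : 0 < ζ) (hβ : 0 < β)
    (ht : 0 ≤ t) :
    ∫ x, (if x = β then β * t * Real.exp (-(β * t))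
          else x * (Real.exp (-(x * t)) - Real.exp (-(β * t))) / (β - x))
        ∂(gammaMeasure γ ζ) =
      ∫ τ in (0:ℝ)..t, γ * ζ ^ γ / (ζ + τ) ^ (γ + 1) * Real.exp (-(β * (t - τ))) := by
  set μ := gammaMeasure γ ζ with hμ
  have hprob : IsProbabilityMeasure μ := isProbabilityMeasure_gammaMeasure hγ hζ
  set ν := volume.restrict (Ioc (0:ℝ) t) with hν
  have hae : ∀ᵐ x ∂μ, 0 ≤ x := by
    rw [ae_iff]
    have hs : {x : ℝ | ¬ 0 ≤ x} = Iio 0 := by ext x; simp [not_le]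
    rw [hs, hμ, gammaMeasure, withDensity_apply _ measurableSet_Iio,
      lintegral_gammaPDF_of_nonpos le_rfl]
  have hcont : Continuous (fun p : ℝ × ℝ =>
      p.1 * Real.exp (-(p.1 * p.2)) * Real.exp (-(β * (t - p.2)))) := by fun_prop
  have hid : Integrable (fun x : ℝ => x) μ := by
    simpa using aux_moment_integrable γ ζ 0 hγ hζ le_rfl
  have hInt : Integrable (fun p : ℝ × ℝ =>
      p.1 * Real.exp (-(p.1 * p.2)) * Real.exp (-(β * (t - p.2)))) (μ.prod ν) := by
    rw [integrable_prod_iff hcont.aestronglyMeasurable]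
    constructor
    · refine ae_of_all _ fun x => ?_
      exact (Continuous.integrableOn_Ioc (by fun_prop))
    · refine Integrable.mono' ((hid.abs.mul_const t))
        (hcont.aestronglyMeasurable.norm.integral_prod_right') ?_
      filter_upwards [hae] with x hx
      have hb : ∀ τ ∈ Ioc (0:ℝ) t,
          ‖‖x * Real.exp (-(x * τ)) * Real.exp (-(β * (t - τ)))‖‖ ≤ |x| := by
        intro τ hτ
        rw [norm_norm, norm_mul, norm_mul, Real.norm_eq_abs, Real.norm_eq_abs,
          Real.norm_eq_abs, abs_of_pos (Real.exp_pos _), abs_of_pos (Real.exp_pos _)]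
        have h1 : Real.exp (-(x * τ)) ≤ 1 := by
          rw [Real.exp_le_one_iff]
          have := mul_nonneg hx hτ.1.le
          linarith
        have h2 : Real.exp (-(β * (t - τ))) ≤ 1 := by
          rw [Real.exp_le_one_iff]
          have := mul_nonneg hβ.le (sub_nonneg.mpr hτ.2)
          linarith
        have h3 := mul_le_mul (mul_le_mul_of_nonneg_left h1 (abs_nonneg x)) h2
          (Real.exp_pos _).le (by positivity)
        simpa using h3
      calc ‖∫ τ in Ioc (0:ℝ) t, ‖x * Real.exp (-(x * τ)) * Real.exp (-(β * (t - τ)))‖‖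
          ≤ |x| * (volume (Ioc (0:ℝ) t)).toReal :=
            norm_setIntegral_le_of_norm_le_const_ae' (by simp [Real.volume_Ioc])
              (Filter.Eventually.of_forall hb)
        _ = |x| * t := by
            rw [Real.volume_Ioc, ENNReal.toReal_ofReal (by linarith), sub_zero]
  calc ∫ x, (if x = β then β * t * Real.exp (-(β * t))
          else x * (Real.exp (-(x * t)) - Real.exp (-(β * t))) / (β - x)) ∂μ
      = ∫ x, (∫ τ in Ioc (0:ℝ) t,
          x * Real.exp (-(x * τ)) * Real.exp (-(β * (t - τ)))) ∂μ := by
        refine integral_congr_ae (ae_of_all _ fun x => ?_)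
        exact (aux_pointwise β t x).trans (intervalIntegral.integral_of_le ht)
    _ = ∫ τ in Ioc (0:ℝ) t, (∫ x, x * Real.exp (-(x * τ)) * Real.exp (-(β * (t - τ))) ∂μ) := by
        exact integral_integral_swap hInt
    _ = ∫ τ in Ioc (0:ℝ) t, γ * ζ ^ γ / (ζ + τ) ^ (γ + 1) * Real.exp (-(β * (t - τ))) := by
        refine setIntegral_congr_fun measurableSet_Ioc (fun τ hτ => ?_)
        rw [← aux_moment γ ζ τ hγ hζ hτ.1.le, ← integral_mul_const]
    _ = _ := (intervalIntegral.integral_of_le ht).symm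
end

section
/- Let X be a Gamma(γ, ζ)-distributed random variable with γ, ζ > 0, let c₁, c₂, β > 0 and t ≥ 0. Then E[exp(-c₂ X t) · c₁ X · (exp(-c₁ X t) - exp(-β t))/(β - c₁ X)] = γ c₁ ζ^γ ∫₀^t exp(-β (t - τ)) / (ζ + c₁ τ + c₂ t)^{γ+1} dτ, where the singular factor is interpreted via its continuous extension at c₁ X = β. -/
open MeasureTheory ProbabilityTheory
open scoped ENNReal NNReal

lemma intExpMul (c a b : ℝ) (hc : c ≠ 0) :
    ∫ τ in a..b, Real.exp (c * τ) = (Real.exp (c * b) - Real.exp (c * a)) / c := by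
  have h : ∀ τ : ℝ, HasDerivAt (fun y => Real.exp (c * y) / c) (Real.exp (c * τ)) τ := by
    intro τ
    have := ((Real.hasDerivAt_exp (c * τ)).comp τ ((hasDerivAt_id τ).const_mul c)).div_const c
    simpa [mul_comm, mul_div_assoc, mul_div_cancel_right₀ _ hc, mul_div_cancel_left₀ _ hc]
      using this
  rw [intervalIntegral.integral_eq_sub_of_hasDerivAt (fun τ _ => h τ)
    ((Real.continuous_exp.comp (continuous_const.mul continuous_id)).intervalIntegrable a b)]
  ring

lemma pointwise_conv (c₁ c₂ β t x : ℝ) (ht : 0 ≤ t) :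
    (if c₁ * x = β then Real.exp (-(c₂ * x * t)) * (β * t * Real.exp (-(β * t)))
      else Real.exp (-(c₂ * x * t)) *
        (c₁ * x * (Real.exp (-(c₁ * x * t)) - Real.exp (-(β * t))) / (β - c₁ * x)))
    = ∫ τ in Set.Ioc (0:ℝ) t,
        Real.exp (-(β * (t - τ))) * (c₁ * x * Real.exp (-((c₁ * τ + c₂ * t) * x))) := by
  rw [← intervalIntegral.integral_of_le ht]
  have hrw : ∀ τ : ℝ,
      Real.exp (-(β * (t - τ))) * (c₁ * x * Real.exp (-((c₁ * τ + c₂ * t) * x)))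
      = (c₁ * x * Real.exp (-(c₂ * x * t) - β * t)) * Real.exp ((β - c₁ * x) * τ) := by
    intro τ
    rw [show Real.exp (-(β * (t - τ))) * (c₁ * x * Real.exp (-((c₁ * τ + c₂ * t) * x)))
        = c₁ * x * (Real.exp (-(β * (t - τ))) * Real.exp (-((c₁ * τ + c₂ * t) * x))) by ring,
      ← Real.exp_add,
      show (c₁ * x * Real.exp (-(c₂ * x * t) - β * t)) * Real.exp ((β - c₁ * x) * τ)
        = c₁ * x * (Real.exp (-(c₂ * x * t) - β * t) * Real.exp ((β - c₁ * x) * τ)) by ring,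
      ← Real.exp_add]
    ring_nf
  simp_rw [hrw]
  rw [intervalIntegral.integral_const_mul]
  by_cases hc : c₁ * x = β
  · rw [if_pos hc, hc]
    simp only [sub_self, zero_mul, Real.exp_zero, intervalIntegral.integral_const, smul_eq_mul,
      sub_zero, mul_one]
    rw [show -(c₂ * x * t) - β * t = -(c₂ * x * t) + -(β * t) by ring, Real.exp_add]
    ring
  · rw [if_neg hc, intExpMul _ _ _ (sub_ne_zero.mpr (Ne.symm hc)), mul_zero, Real.exp_zero]
    have hne : β - c₁ * x ≠ 0 := sub_ne_zero.mpr (Ne.symm hc)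
    have e1 : Real.exp (-(c₂ * x * t) - β * t)
        = Real.exp (-(c₂ * x * t)) * Real.exp (-(β * t)) := by
      rw [← Real.exp_add]; ring_nf
    have e2 : Real.exp (-(β * t)) * Real.exp ((β - c₁ * x) * t) = Real.exp (-(c₁ * x * t)) := by
      rw [← Real.exp_add]; ring_nf
    rw [e1]
    rw [← e2]
    field_simp

lemma gamma_exp_moment {γ ζ : ℝ} (hγ : 0 < γ) (hζ : 0 < ζ) {s : ℝ} (hs : 0 < s) :
    ∫ x, x * Real.exp (-(s * x)) ∂(gammaMeasure γ ζ) = γ * ζ ^ γ / (ζ + s) ^ (γ + 1) := by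
  have hΓ : Real.Gamma γ ≠ 0 := (Real.Gamma_pos_of_pos hγ).ne'
  have hζs : (0:ℝ) < ζ + s := by linarith
  have hmeas : Measurable fun x => (gammaPDFReal γ ζ x).toNNReal :=
    (measurable_gammaPDFReal γ ζ).real_toNNReal
  have h0 : gammaMeasure γ ζ
      = volume.withDensity (fun x => (((gammaPDFReal γ ζ x).toNNReal : ℝ≥0) : ℝ≥0∞)) := rfl
  rw [h0, integral_withDensity_eq_integral_smul hmeas]
  have h1 : ∀ x : ℝ, ((gammaPDFReal γ ζ x).toNNReal : ℝ≥0) • (x * Real.exp (-(s * x)))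
      = gammaPDFReal γ ζ x * (x * Real.exp (-(s * x))) := by
    intro x
    rw [NNReal.smul_def, Real.coe_toNNReal _ (gammaPDFReal_nonneg hγ hζ x), smul_eq_mul]
  simp_rw [h1]
  have h2 : ∫ x, gammaPDFReal γ ζ x * (x * Real.exp (-(s * x)))
      = ∫ x in Set.Ioi (0:ℝ), gammaPDFReal γ ζ x * (x * Real.exp (-(s * x))) := by
    refine (setIntegral_eq_integral_of_forall_compl_eq_zero fun x hx => ?_).symm
    rcases eq_or_lt_of_le (not_lt.mp (by simpa using hx) : x ≤ 0) with h | h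
    · simp [h]
    · simp [gammaPDFReal, not_le.mpr h]
  rw [h2]
  have h3 : ∀ x ∈ Set.Ioi (0:ℝ), gammaPDFReal γ ζ x * (x * Real.exp (-(s * x)))
      = (ζ ^ γ / Real.Gamma γ) * (x ^ ((γ + 1) - 1) * Real.exp (-((ζ + s) * x))) := by
    intro x hx
    have hx0 : (0:ℝ) < x := hx
    rw [gammaPDFReal, if_pos hx0.le]
    have e1 : x ^ (γ - 1) * x = x ^ ((γ + 1) - 1) := by
      rw [show (γ + 1) - 1 = (γ - 1) + 1 by ring, Real.rpow_add_one hx0.ne']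
    have e2 : Real.exp (-(ζ * x)) * Real.exp (-(s * x)) = Real.exp (-((ζ + s) * x)) := by
      rw [← Real.exp_add]; ring_nf
    calc ζ ^ γ / Real.Gamma γ * x ^ (γ - 1) * Real.exp (-(ζ * x)) * (x * Real.exp (-(s * x)))
        = ζ ^ γ / Real.Gamma γ
            * ((x ^ (γ - 1) * x) * (Real.exp (-(ζ * x)) * Real.exp (-(s * x)))) := by ring
      _ = (ζ ^ γ / Real.Gamma γ) * (x ^ ((γ + 1) - 1) * Real.exp (-((ζ + s) * x))) := by
          rw [e1, e2]
  rw [setIntegral_congr_fun measurableSet_Ioi h3, MeasureTheory.integral_const_mul,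
    Real.integral_rpow_mul_exp_neg_mul_Ioi (by linarith : (0:ℝ) < γ + 1) hζs,
    Real.Gamma_add_one hγ.ne']
  rw [Real.div_rpow zero_le_one hζs.le, Real.one_rpow]
  field_simp

lemma gamma_integrable_id {γ ζ : ℝ} (hγ : 0 < γ) (hζ : 0 < ζ) :
    Integrable (fun x : ℝ => x) (gammaMeasure γ ζ) := by
  rw [gammaMeasure, show gammaPDF γ ζ = fun x => ENNReal.ofReal (gammaPDFReal γ ζ x) from rfl,
    integrable_withDensity_iff (measurable_gammaPDFReal γ ζ).ennreal_ofReal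
    (Filter.Eventually.of_forall fun x => ENNReal.ofReal_lt_top)]
  have key : ∀ x : ℝ, x * (ENNReal.ofReal (gammaPDFReal γ ζ x)).toReal
      = x * gammaPDFReal γ ζ x := by
    intro x; rw [ENNReal.toReal_ofReal (gammaPDFReal_nonneg hγ hζ x)]
  simp_rw [key]
  have h1 : IntegrableOn (fun x : ℝ => x * gammaPDFReal γ ζ x) (Set.Iio 0) := by
    refine (integrableOn_zero (ε' := ℝ)).congr_fun (fun x hx => ?_) measurableSet_Iio
    rw [gammaPDFReal, if_neg (not_le.mpr (Set.mem_Iio.mp hx))]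
    simp
  have h2 : IntegrableOn (fun x : ℝ => x * gammaPDFReal γ ζ x) (Set.Ici 0) := by
    rw [integrableOn_Ici_iff_integrableOn_Ioi]
    have hi := (integrableOn_rpow_mul_exp_neg_mul_rpow
      (by linarith : (-1:ℝ) < γ) zero_lt_one hζ).const_mul (ζ ^ γ / Real.Gamma γ)
    refine IntegrableOn.congr_fun hi (fun x hx => ?_) measurableSet_Ioi
    have hx0 : (0:ℝ) < x := hx
    have e1 : x ^ γ = x ^ (γ - 1) * x := by
      nth_rewrite 1 [show γ = (γ - 1) + 1 by ring]
      exact Real.rpow_add_one hx0.ne' _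
    rw [Real.rpow_one, e1, gammaPDFReal, if_pos hx0.le, neg_mul]
    ring
  have h := h1.union h2
  rwa [Set.Iio_union_Ici, integrableOn_univ] at h


/-- Mixed cross-term: for `X ~ Gamma(γ, ζ)`, `c₁, c₂, β > 0` and `t ≥ 0`,
`E[e^{-c₂Xt} · c₁X (e^{-c₁Xt} - e^{-βt})/(β - c₁X)]
  = γ c₁ ζ^γ ∫₀ᵗ e^{-β(t-τ)}/(ζ + c₁τ + c₂t)^{γ+1} dτ`,
with the singular factor interpreted via its continuous extension at `c₁ X = β`. -/
theorem gamma_mixed_cross_term (γ ζ c₁ c₂ β t : ℝ) (hγ : 0 < γ) (hζ : 0 < ζ)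
    (hc₁ : 0 < c₁) (hc₂ : 0 < c₂) (hβ : 0 < β) (ht : 0 ≤ t) :
    ∫ x, (if c₁ * x = β then Real.exp (-(c₂ * x * t)) * (β * t * Real.exp (-(β * t)))
          else Real.exp (-(c₂ * x * t)) *
            (c₁ * x * (Real.exp (-(c₁ * x * t)) - Real.exp (-(β * t))) / (β - c₁ * x)))
        ∂(gammaMeasure γ ζ) =
      γ * c₁ * ζ ^ γ *
        ∫ τ in (0:ℝ)..t, Real.exp (-(β * (t - τ))) / (ζ + c₁ * τ + c₂ * t) ^ (γ + 1) := by
  haveI : IsProbabilityMeasure (gammaMeasure γ ζ) := isProbabilityMeasure_gammaMeasure hγ hζ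
  have hae : ∀ᵐ x ∂(gammaMeasure γ ζ), 0 ≤ x := by
    rw [ae_iff]
    have hset : {x : ℝ | ¬ 0 ≤ x} = Set.Iio 0 := by ext x; simp
    rw [hset, gammaMeasure, withDensity_apply _ measurableSet_Iio,
      lintegral_gammaPDF_of_nonpos le_rfl]
  have hcont : Continuous (Function.uncurry fun (x τ : ℝ) =>
      Real.exp (-(β * (t - τ))) * (c₁ * x * Real.exp (-((c₁ * τ + c₂ * t) * x)))) := by
    fun_prop

  have hint : Integrable (Function.uncurry fun (x τ : ℝ) =>
      Real.exp (-(β * (t - τ))) * (c₁ * x * Real.exp (-((c₁ * τ + c₂ * t) * x))))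
      ((gammaMeasure γ ζ).prod (volume.restrict (Set.Ioc 0 t))) := by
    rw [integrable_prod_iff hcont.aestronglyMeasurable]
    refine ⟨Filter.Eventually.of_forall fun x => ?_, ?_⟩
    · exact (hcont.comp (Continuous.prodMk_right x)).integrableOn_Ioc
    · refine Integrable.mono' (((gamma_integrable_id hγ hζ).const_mul c₁).mul_const t)
        hcont.norm.aestronglyMeasurable.integral_prod_right' ?_
      filter_upwards [hae] with x hx
      have hb : ∀ τ ∈ Set.Ioc (0:ℝ) t,
          ‖‖Real.exp (-(β * (t - τ))) * (c₁ * x * Real.exp (-((c₁ * τ + c₂ * t) * x)))‖‖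
            ≤ c₁ * x := by
        intro τ hτ
        rw [norm_norm, Real.norm_eq_abs, abs_of_nonneg (by positivity)]
        have h1 : Real.exp (-(β * (t - τ))) ≤ 1 :=
          Real.exp_le_one_iff.mpr (by nlinarith [hτ.2])
        have h2 : Real.exp (-((c₁ * τ + c₂ * t) * x)) ≤ 1 := by
          refine Real.exp_le_one_iff.mpr ?_
          have : 0 ≤ (c₁ * τ + c₂ * t) * x := by
            have := hτ.1
            positivity
          linarith
        calc Real.exp (-(β * (t - τ))) * (c₁ * x * Real.exp (-((c₁ * τ + c₂ * t) * x)))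
            ≤ 1 * (c₁ * x * Real.exp (-((c₁ * τ + c₂ * t) * x))) := by
              refine mul_le_mul_of_nonneg_right h1 (by positivity)
          _ = c₁ * x * Real.exp (-((c₁ * τ + c₂ * t) * x)) := one_mul _
          _ ≤ c₁ * x * 1 := mul_le_mul_of_nonneg_left h2 (by positivity)
          _ = c₁ * x := mul_one _
      have hle := norm_setIntegral_le_of_norm_le_const (μ := volume) (C := c₁ * x)
        (by rw [Real.volume_Ioc]; exact ENNReal.ofReal_lt_top) hb
      calc ‖∫ τ in Set.Ioc (0:ℝ) t,
              ‖Real.exp (-(β * (t - τ))) * (c₁ * x * Real.exp (-((c₁ * τ + c₂ * t) * x)))‖‖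
          ≤ (c₁ * x) * (volume (Set.Ioc (0:ℝ) t)).toReal := hle
        _ = c₁ * x * t := by rw [Real.volume_Ioc, sub_zero, ENNReal.toReal_ofReal ht]
  have step1 : (∫ x, (if c₁ * x = β then Real.exp (-(c₂ * x * t)) * (β * t * Real.exp (-(β * t)))
          else Real.exp (-(c₂ * x * t)) *
            (c₁ * x * (Real.exp (-(c₁ * x * t)) - Real.exp (-(β * t))) / (β - c₁ * x)))
        ∂(gammaMeasure γ ζ))
      = ∫ x, (∫ τ in Set.Ioc (0:ℝ) t,
          Real.exp (-(β * (t - τ))) * (c₁ * x * Real.exp (-((c₁ * τ + c₂ * t) * x))))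
          ∂(gammaMeasure γ ζ) :=
    integral_congr_ae (Filter.Eventually.of_forall fun x => pointwise_conv c₁ c₂ β t x ht)
  rw [step1, integral_integral_swap hint]
  have step3 : ∀ τ ∈ Set.Ioc (0:ℝ) t,
      (∫ x, Real.exp (-(β * (t - τ))) * (c₁ * x * Real.exp (-((c₁ * τ + c₂ * t) * x)))
          ∂(gammaMeasure γ ζ))
      = γ * c₁ * ζ ^ γ * (Real.exp (-(β * (t - τ))) / (ζ + c₁ * τ + c₂ * t) ^ (γ + 1)) := by
    intro τ hτ
    have hs : 0 < c₁ * τ + c₂ * t := by nlinarith [hτ.1]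
    have hptw : ∀ x : ℝ,
        Real.exp (-(β * (t - τ))) * (c₁ * x * Real.exp (-((c₁ * τ + c₂ * t) * x)))
        = (Real.exp (-(β * (t - τ))) * c₁) * (x * Real.exp (-((c₁ * τ + c₂ * t) * x))) := by
      intro x; ring
    simp_rw [hptw]
    rw [MeasureTheory.integral_const_mul, gamma_exp_moment hγ hζ hs,
      show ζ + (c₁ * τ + c₂ * t) = ζ + c₁ * τ + c₂ * t by ring]
    ring
  rw [setIntegral_congr_fun measurableSet_Ioc step3, intervalIntegral.integral_of_le ht,
    MeasureTheory.integral_const_mul]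
end

section
/- For a, b, β₁, β₂ > 0 with a ≠ β₁ and b ≠ β₂ and for t ≥ 0, the function t ↦ [(exp(-a t) - exp(-β₁ t))/(β₁ - a)] · [(exp(-b t) - exp(-β₂ t))/(β₂ - b)] equals ∫₀^t ∫₀^θ [exp(-a(t+τ-θ) - b(t-θ) - β₁(θ-τ) - β₂ θ) + exp(-b(t+τ-θ) - a(t-θ) - β₂(θ-τ) - β₁ θ)] dτ dθ. -/
private lemma cont_exp_affine (c d : ℝ) : Continuous fun x : ℝ => Real.exp (c + d * x) := by
  fun_prop

private lemma int_exp (c d l u : ℝ) (hd : d ≠ 0) :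
    (∫ x in l..u, Real.exp (c + d * x)) = (Real.exp (c + d * u) - Real.exp (c + d * l)) / d := by
  have h : ∀ x ∈ Set.uIcc l u,
      HasDerivAt (fun y => Real.exp (c + d * y) / d) (Real.exp (c + d * x)) x := by
    intro x _
    have h1 : HasDerivAt (fun y : ℝ => c + d * y) d x := by
      simpa using ((hasDerivAt_id x).const_mul d).const_add c
    have h2 := h1.exp.div_const d
    simpa [mul_div_assoc, div_self hd] using h2
  rw [intervalIntegral.integral_eq_sub_of_hasDerivAt h
    ((cont_exp_affine c d).intervalIntegrable _ _)]
  ring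

/-- Product of two exponential-difference quotients as a double integral over the triangle
`0 ≤ τ ≤ θ ≤ t`. -/
theorem product_of_convolutions (a b β₁ β₂ t : ℝ) (ha : 0 < a) (hb : 0 < b)
    (hβ₁ : 0 < β₁) (hβ₂ : 0 < β₂) (ha' : a ≠ β₁) (hb' : b ≠ β₂) (ht : 0 ≤ t) :
    ((Real.exp (-(a * t)) - Real.exp (-(β₁ * t))) / (β₁ - a)) *
      ((Real.exp (-(b * t)) - Real.exp (-(β₂ * t))) / (β₂ - b)) =
    ∫ θ in (0:ℝ)..t, ∫ τ in (0:ℝ)..θ,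
      (Real.exp (-(a * (t + τ - θ)) - b * (t - θ) - β₁ * (θ - τ) - β₂ * θ) +
       Real.exp (-(b * (t + τ - θ)) - a * (t - θ) - β₂ * (θ - τ) - β₁ * θ)) := by
  have hpa : β₁ - a ≠ 0 := sub_ne_zero.mpr (Ne.symm ha')
  have hqb : β₂ - b ≠ 0 := sub_ne_zero.mpr (Ne.symm hb')
  have hp : b - β₂ ≠ 0 := sub_ne_zero.mpr hb'
  have hq : a - β₁ ≠ 0 := sub_ne_zero.mpr ha'
  set C : ℝ := -((a + b) * t) with hC
  have hinner : (fun θ : ℝ => ∫ τ in (0:ℝ)..θ,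
      (Real.exp (-(a * (t + τ - θ)) - b * (t - θ) - β₁ * (θ - τ) - β₂ * θ) +
       Real.exp (-(b * (t + τ - θ)) - a * (t - θ) - β₂ * (θ - τ) - β₁ * θ)))
      = fun θ : ℝ =>
        ((Real.exp (C + (b - β₂) * θ) - Real.exp (C + (a + b - β₁ - β₂) * θ)) / (β₁ - a)
          + (Real.exp (C + (a - β₁) * θ) - Real.exp (C + (a + b - β₁ - β₂) * θ)) / (β₂ - b)) := by
    funext θ
    have e12 : (fun τ : ℝ =>
        Real.exp (-(a * (t + τ - θ)) - b * (t - θ) - β₁ * (θ - τ) - β₂ * θ) +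
        Real.exp (-(b * (t + τ - θ)) - a * (t - θ) - β₂ * (θ - τ) - β₁ * θ))
        = fun τ : ℝ =>
        Real.exp ((C + (a + b - β₁ - β₂) * θ) + (β₁ - a) * τ) +
        Real.exp ((C + (a + b - β₁ - β₂) * θ) + (β₂ - b) * τ) := by
      funext τ
      congr 1 <;> · congr 1; simp only [hC]; ring
    rw [e12]
    rw [intervalIntegral.integral_add ((cont_exp_affine _ _).intervalIntegrable _ _)
      ((cont_exp_affine _ _).intervalIntegrable _ _), int_exp _ _ _ _ hpa, int_exp _ _ _ _ hqb]
    rw [show (C + (a + b - β₁ - β₂) * θ) + (β₁ - a) * θ = C + (b - β₂) * θ by ring,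
        show (C + (a + b - β₁ - β₂) * θ) + (β₁ - a) * 0 = C + (a + b - β₁ - β₂) * θ by ring,
        show (C + (a + b - β₁ - β₂) * θ) + (β₂ - b) * θ = C + (a - β₁) * θ by ring,
        show (C + (a + b - β₁ - β₂) * θ) + (β₂ - b) * 0 = C + (a + b - β₁ - β₂) * θ by ring]
  rw [show (∫ θ in (0:ℝ)..t, ∫ τ in (0:ℝ)..θ,
      (Real.exp (-(a * (t + τ - θ)) - b * (t - θ) - β₁ * (θ - τ) - β₂ * θ) +
       Real.exp (-(b * (t + τ - θ)) - a * (t - θ) - β₂ * (θ - τ) - β₁ * θ)))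
    = ∫ θ in (0:ℝ)..t,
        ((Real.exp (C + (b - β₂) * θ) - Real.exp (C + (a + b - β₁ - β₂) * θ)) / (β₁ - a)
          + (Real.exp (C + (a - β₁) * θ) - Real.exp (C + (a + b - β₁ - β₂) * θ)) / (β₂ - b))
    from by rw [hinner]]
  have i1 : IntervalIntegrable (fun θ : ℝ => Real.exp (C + (b - β₂) * θ))
      MeasureTheory.volume 0 t := (cont_exp_affine _ _).intervalIntegrable _ _
  have i2 : IntervalIntegrable (fun θ : ℝ => Real.exp (C + (a - β₁) * θ))
      MeasureTheory.volume 0 t := (cont_exp_affine _ _).intervalIntegrable _ _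
  have i3 : IntervalIntegrable (fun θ : ℝ => Real.exp (C + (a + b - β₁ - β₂) * θ))
      MeasureTheory.volume 0 t := (cont_exp_affine _ _).intervalIntegrable _ _
  rw [intervalIntegral.integral_add ((i1.sub i3).div_const _) ((i2.sub i3).div_const _),
      intervalIntegral.integral_div, intervalIntegral.integral_div,
      intervalIntegral.integral_sub i1 i3, intervalIntegral.integral_sub i2 i3,
      int_exp _ _ _ _ hp, int_exp _ _ _ _ hq]
  have E1 : Real.exp (C + (b - β₂) * t) = Real.exp (-(a * t)) * Real.exp (-(β₂ * t)) := by
    rw [← Real.exp_add]; congr 1; simp only [hC]; ring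
  have E2 : Real.exp (C + (a - β₁) * t) = Real.exp (-(β₁ * t)) * Real.exp (-(b * t)) := by
    rw [← Real.exp_add]; congr 1; simp only [hC]; ring
  have E0 : Real.exp (C + (b - β₂) * 0) = Real.exp (-(a * t)) * Real.exp (-(b * t)) := by
    rw [← Real.exp_add]; congr 1; simp only [hC]; ring
  have E0' : Real.exp (C + (a - β₁) * 0) = Real.exp (-(a * t)) * Real.exp (-(b * t)) := by
    rw [← Real.exp_add]; congr 1; simp only [hC]; ring
  rcases eq_or_ne (a + b - β₁ - β₂) 0 with hk | hk
  · have hβ₂' : β₂ = a + b - β₁ := by linarith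
    subst hβ₂'
    have e3 : (fun θ : ℝ => Real.exp (C + (a + b - β₁ - (a + b - β₁)) * θ))
        = fun _ : ℝ => Real.exp C := by
      funext θ; congr 1; ring
    rw [e3, intervalIntegral.integral_const, smul_eq_mul]
    have EC : Real.exp C = Real.exp (-(a * t)) * Real.exp (-(b * t)) := by
      rw [← Real.exp_add]; congr 1; simp only [hC]; ring
    have EV : Real.exp (-((a + b - β₁) * t))
        = Real.exp (-(a * t)) * Real.exp (-(b * t)) / Real.exp (-(β₁ * t)) := by
      rw [eq_div_iff (Real.exp_ne_zero _), ← Real.exp_add, ← Real.exp_add]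
      congr 1; ring
    rw [E1, E2, E0, E0', EC, EV]
    field_simp
    ring
  · rw [int_exp _ _ _ _ hk]
    have E3 : Real.exp (C + (a + b - β₁ - β₂) * t)
        = Real.exp (-(β₁ * t)) * Real.exp (-(β₂ * t)) := by
      rw [← Real.exp_add]; congr 1; simp only [hC]; ring
    have E4 : Real.exp (C + (a + b - β₁ - β₂) * 0)
        = Real.exp (-(a * t)) * Real.exp (-(b * t)) := by
      rw [← Real.exp_add]; congr 1; simp only [hC]; ring
    rw [E1, E2, E3, E4, E0, E0']
    field_simp
    ring
end
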